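/- Assume the McKay Conjecture holds for the prime p: for every finite group H and Sylow p-subgroup Q of H, μ_p(H) = μ_p(N_H(Q)). Let G be a finite group, P a Sylow p-subgroup of G, N = N_G(P), and let g ∈ G be an element whose conjugacy class in G has cardinality coprime to p and which centralizes P (i.e. P ≤ C_G(g)). Then μ_p(C_G(g)) = μ_p(C_N(g)), where C_N(g) = C_G(g) ∩ N. -/

import Mathlib

open CategoryTheory

/-- `mu p H` is the number of isomorphism classes of irreducible finite-dimensional
complex representations of `H` whose dimension is coprime to `p`. -/
noncomputable def mu (p : ℕ) (H : Type) [Group H] : ℕ :=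
  Nat.card {c : _root_.Quotient (isIsomorphicSetoid (FDRep ℂ H)) //
    ∃ V : FDRep ℂ H, Quotient.mk (isIsomorphicSetoid (FDRep ℂ H)) V = c ∧
      Simple V ∧ p.Coprime (Module.finrank ℂ V)}

/-! Since `P ≤ C_G(g)`, `P` is a Sylow `p`-subgroup of `C_G(g)`, and its normalizer there is
`C_G(g) ∩ N_G(P)`; the McKay Conjecture applied to `C_G(g)` gives the claim, once one knows that
`mu p` is invariant under group isomorphisms. -/

namespace CategoryTheory.Equivalence

variable {C D : Type*} [Category C] [Category D]

def isoClassesEquiv (E : C ≌ D) :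
    _root_.Quotient (isIsomorphicSetoid C) ≃ _root_.Quotient (isIsomorphicSetoid D) where
  toFun := _root_.Quotient.map E.functor.obj fun _ _ ⟨i⟩ => ⟨E.functor.mapIso i⟩
  invFun := _root_.Quotient.map E.inverse.obj fun _ _ ⟨i⟩ => ⟨E.inverse.mapIso i⟩
  left_inv c := _root_.Quotient.inductionOn c fun X =>
    _root_.Quotient.sound ⟨(E.unitIso.app X).symm⟩
  right_inv c := _root_.Quotient.inductionOn c fun Y =>
    _root_.Quotient.sound ⟨E.counitIso.app Y⟩

lemma isoClassesEquiv_mk (E : C ≌ D) (X : C) :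
    E.isoClassesEquiv (_root_.Quotient.mk _ X) = _root_.Quotient.mk _ (E.functor.obj X) :=
  rfl

lemma card_isoClasses_congr (E : C ≌ D) {P : C → Prop} {Q : D → Prop}
    (hPQ : ∀ X, P X ↔ Q (E.functor.obj X)) (hQ : ∀ {Y Y' : D}, (Y ≅ Y') → Q Y → Q Y') :
    Nat.card {c : _root_.Quotient (isIsomorphicSetoid C) //
        ∃ X, _root_.Quotient.mk _ X = c ∧ P X} =
      Nat.card {d : _root_.Quotient (isIsomorphicSetoid D) //
        ∃ Y, _root_.Quotient.mk _ Y = d ∧ Q Y} := by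
  refine Nat.card_congr (E.isoClassesEquiv.subtypeEquiv fun c => ⟨?_, ?_⟩)
  · rintro ⟨X, rfl, hX⟩
    exact ⟨E.functor.obj X, rfl, (hPQ X).mp hX⟩
  · rintro ⟨Y, hY, hQY⟩
    have hQ_inv : Q (E.functor.obj (E.inverse.obj Y)) := hQ (E.counitIso.app Y).symm hQY
    refine ⟨E.inverse.obj Y, E.isoClassesEquiv.injective ?_, (hPQ _).mpr hQ_inv⟩
    rw [isoClassesEquiv_mk, ← hY]
    exact _root_.Quotient.sound ⟨E.counitIso.app Y⟩

end CategoryTheory.Equivalence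

lemma mu_congr (p : ℕ) {H K : Type} [Group H] [Group K] (e : H ≃* K) : mu p H = mu p K := by
  refine ((Action.resEquiv (FGModuleCat ℂ) e).card_isoClasses_congr (fun V => ?_) ?_).symm
  · -- restriction along `e` does not change the underlying vector space
    exact and_congr (simple_obj_iff _ V).symm Iff.rfl
  · rintro V W i ⟨_, hcop⟩
    exact ⟨Simple.of_iso i.symm, (FDRep.isoToLinearEquiv i).finrank_eq ▸ hcop⟩

lemma mu_normalizer_subgroupOf {p : ℕ} {G : Type} [Group G] {P C : Subgroup G} (h : P ≤ C) :
    mu p (Subgroup.normalizer ((P.subgroupOf C : Subgroup C) : Set C))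
      = mu p (C ⊓ Subgroup.normalizer (P : Set G) : Subgroup G) := by
  rw [← Subgroup.subgroupOf_normalizer_eq h, ← Subgroup.inf_subgroupOf_left]
  exact mu_congr p (Subgroup.subgroupOfEquivOfLe inf_le_left)

theorem mu_centralizer_eq_of_mckay_general {p : ℕ}
    (MC : ∀ (H : Type) [Group H] [Fintype H] (Q : Sylow p H),
      mu p H = mu p (Subgroup.normalizer ((Q : Subgroup H) : Set H)))
    {G : Type} [Group G] [Fintype G] (P : Sylow p G) (g : G)
    (hcent : (P : Subgroup G) ≤ Subgroup.centralizer {g}) :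
    mu p (Subgroup.centralizer {g})
      = mu p (Subgroup.centralizer {g} ⊓ Subgroup.normalizer ((P : Subgroup G) : Set G) : Subgroup G) := by
  have : Fintype (Subgroup.centralizer {g}) := Fintype.ofFinite _
  rw [MC _ (P.subtype hcent), Sylow.coe_subtype]
  exact mu_normalizer_subgroupOf hcent

/-- Assuming the McKay Conjecture for `p`, if the conjugacy class of `g` in `G` has
cardinality coprime to `p` and `P ≤ C_G(g)`, then `μ_p(C_G(g)) = μ_p(C_N(g))`, where
`C_N(g) = C_G(g) ∩ N` and `N = N_G(P)`. -/
theorem mu_centralizer_eq_of_mckay {p : ℕ} [Fact p.Prime]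
    (MC : ∀ (H : Type) [Group H] [Fintype H] (Q : Sylow p H),
      mu p H = mu p (Subgroup.normalizer ((Q : Subgroup H) : Set H)))
    {G : Type} [Group G] [Fintype G] (P : Sylow p G) (g : G)
    (hclass : p.Coprime (Nat.card {h : G | IsConj g h}))
    (hcent : (P : Subgroup G) ≤ Subgroup.centralizer {g}) :
    mu p (Subgroup.centralizer {g})
      = mu p (Subgroup.centralizer {g} ⊓ Subgroup.normalizer ((P : Subgroup G) : Set G) : Subgroup G) :=
  mu_centralizer_eq_of_mckay_general MC P g hcent
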